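/- Let M be an n×p real matrix written as M = (X over Y) stacked vertically, with X of size q×p, and let v₀ ∈ ℝⁿ be a unit vector supported on the first q coordinates with upper part v₀'. Decompose v₀' = v_∥ + v_⊥ where v_⊥ is the orthogonal projection of v₀' onto ker(Xᵀ). Then for any σ: ‖MMᵀv₀ − σ²v₀‖² ≥ ‖v_∥‖²·s_min(X)²·s_min(Y)² + σ⁴‖v_⊥‖². -/

import Mathlib

open Matrix

/-!
Since `v₀` vanishes on the `Y`-rows and `Xᵀ v_⊥ = 0`, we have `Mᵀ v₀ = Xᵀ v_∥ =: w`, so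
`MMᵀv₀ - σ²v₀` splits into the blocks `X w - σ² (v_∥ + v_⊥)` and `Y w`. In the top block both
`X w` (it lies in the range of `X`, orthogonal to `ker Xᵀ`) and `v_∥` are orthogonal to `v_⊥`,
so Pythagoras leaves at least `σ⁴ ‖v_⊥‖²`; the bottom block has norm at least
`s_min(Y) ‖w‖ ≥ s_min(Y) s_min(Xᵀ) ‖v_∥‖`.
-/

/-- Euclidean norm of a finitely-indexed real vector. -/
noncomputable def enorm' {ι : Type*} [Fintype ι] (v : ι → ℝ) : ℝ :=
  Real.sqrt (∑ i, v i ^ 2)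

/-- Smallest singular value of a matrix, as the infimum of `‖A v‖` over unit vectors `v`. -/
noncomputable def smin {ι κ : Type*} [Fintype ι] [Fintype κ] (A : Matrix ι κ ℝ) : ℝ :=
  sInf {r : ℝ | ∃ v : κ → ℝ, ∑ t, v t ^ 2 = 1 ∧ r = enorm' (A.mulVec v)}

section

variable {ι κ μ : Type*} [Fintype ι] [Fintype κ] [Fintype μ]

lemma enorm'_sq (v : ι → ℝ) : enorm' v ^ 2 = ∑ i, v i ^ 2 :=
  Real.sq_sqrt (Finset.sum_nonneg fun _ _ => sq_nonneg _)

lemma sum_sq_smul (c : ℝ) (v : ι → ℝ) : ∑ i, (c • v) i ^ 2 = c ^ 2 * ∑ i, v i ^ 2 := by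
  simp only [Pi.smul_apply, smul_eq_mul, mul_pow, Finset.mul_sum]

lemma smin_nonneg (A : Matrix ι κ ℝ) : 0 ≤ smin A :=
  Real.sInf_nonneg (by rintro x ⟨v, -, rfl⟩; exact Real.sqrt_nonneg _)

lemma smin_le_enorm'_mulVec (A : Matrix ι κ ℝ) {u : κ → ℝ} (hu : ∑ t, u t ^ 2 = 1) :
    smin A ≤ enorm' (A *ᵥ u) :=
  csInf_le ⟨0, by rintro x ⟨v, -, rfl⟩; exact Real.sqrt_nonneg _⟩ ⟨u, hu, rfl⟩

lemma smin_sq_mul_sum_sq_le (A : Matrix ι κ ℝ) (v : κ → ℝ) :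
    smin A ^ 2 * ∑ t, v t ^ 2 ≤ ∑ i, (A *ᵥ v) i ^ 2 := by
  rcases (Finset.sum_nonneg fun t _ => sq_nonneg (v t)).eq_or_lt with hv | hv
  · rw [← hv, mul_zero]
    exact Finset.sum_nonneg fun _ _ => sq_nonneg _
  set c := Real.sqrt (∑ t, v t ^ 2)
  have hc : c ^ 2 = ∑ t, v t ^ 2 := Real.sq_sqrt hv.le
  have hunit : ∑ t, (c⁻¹ • v) t ^ 2 = 1 := by
    rw [sum_sq_smul, ← hc, inv_pow, inv_mul_cancel₀ (by positivity)]
  have hsq : smin A ^ 2 ≤ enorm' (A *ᵥ (c⁻¹ • v)) ^ 2 :=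
    pow_le_pow_left₀ (smin_nonneg A) (smin_le_enorm'_mulVec A hunit) 2
  rwa [enorm'_sq, mulVec_smul, sum_sq_smul, inv_pow, ← div_eq_inv_mul,
    le_div_iff₀ (by positivity), hc] at hsq

lemma sum_sq_mul_smin_sq_mul_smin_sq_le (B : Matrix ι κ ℝ) (A : Matrix κ μ ℝ) (v : μ → ℝ) :
    (∑ t, v t ^ 2) * smin A ^ 2 * smin B ^ 2 ≤ ∑ i, (B *ᵥ (A *ᵥ v)) i ^ 2 :=
  calc (∑ t, v t ^ 2) * smin A ^ 2 * smin B ^ 2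
      = smin B ^ 2 * (smin A ^ 2 * ∑ t, v t ^ 2) := by ring
    _ ≤ smin B ^ 2 * ∑ k, (A *ᵥ v) k ^ 2 := by gcongr; exact smin_sq_mul_sum_sq_le A v
    _ ≤ ∑ i, (B *ᵥ (A *ᵥ v)) i ^ 2 := smin_sq_mul_sum_sq_le B _

lemma sq_mul_sum_sq_le_of_orthogonal (a b c : ι → ℝ) (s : ℝ)
    (hac : a ⬝ᵥ c = 0) (hbc : b ⬝ᵥ c = 0) :
    s ^ 2 * ∑ i, c i ^ 2 ≤ ∑ i, (a i - s * (b i + c i)) ^ 2 := by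
  have hexpand : ∑ i, (a i - s * (b i + c i)) ^ 2 = ∑ i, (a i - s * b i) ^ 2
      + s ^ 2 * ∑ i, c i ^ 2 - 2 * s * (a ⬝ᵥ c) + 2 * s ^ 2 * (b ⬝ᵥ c) := by
    simp only [dotProduct, Finset.mul_sum, ← Finset.sum_add_distrib, ← Finset.sum_sub_distrib]
    exact Finset.sum_congr rfl fun i _ => by ring
  rw [hexpand, hac, hbc]
  linarith [Finset.sum_nonneg fun i (_ : i ∈ Finset.univ) => sq_nonneg (a i - s * b i)]

end

section

variable {m n o : Type*} (M : Matrix (m ⊕ n) o ℝ)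

lemma mulVec_apply_inl [Fintype o] (w : o → ℝ) (i : m) :
    (M *ᵥ w) (Sum.inl i) = (M.submatrix Sum.inl id *ᵥ w) i := rfl

lemma mulVec_apply_inr [Fintype o] (w : o → ℝ) (j : n) :
    (M *ᵥ w) (Sum.inr j) = (M.submatrix Sum.inr id *ᵥ w) j := rfl

lemma transpose_mulVec_eq_of_inr_eq_zero [Fintype m] [Fintype n] (v : m ⊕ n → ℝ)
    (hv : ∀ j, v (Sum.inr j) = 0) :
    Mᵀ *ᵥ v = (M.submatrix Sum.inl id)ᵀ *ᵥ fun i => v (Sum.inl i) := by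
  ext k
  simp [mulVec, dotProduct, Fintype.sum_sum_type, hv]

end

theorem row_split_lower_bound_general (q r p : ℕ)
    (M : Matrix (Fin q ⊕ Fin r) (Fin p) ℝ)
    (X : Matrix (Fin q) (Fin p) ℝ) (Y : Matrix (Fin r) (Fin p) ℝ)
    (hX : X = M.submatrix Sum.inl id) (hY : Y = M.submatrix Sum.inr id)
    (v₀ : Fin q ⊕ Fin r → ℝ)
    (hv₀supp : ∀ t, v₀ (Sum.inr t) = 0)
    (v₀' vpar vperp : Fin q → ℝ)
    (hv₀' : v₀' = fun t => v₀ (Sum.inl t))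
    (hsplit : v₀' = vpar + vperp)
    (hperp : Xᵀ.mulVec vperp = 0)
    (hpar : ∀ w : Fin q → ℝ, Xᵀ.mulVec w = 0 → ∑ t, vpar t * w t = 0)
    (σ : ℝ) :
    enorm' ((M * Mᵀ).mulVec v₀ - σ ^ 2 • v₀) ^ 2 ≥
      (∑ t, vpar t ^ 2) * smin Xᵀ ^ 2 * smin Y ^ 2 + σ ^ 4 * (∑ t, vperp t ^ 2) := by
  set w := Xᵀ *ᵥ vpar
  have hMv : Mᵀ *ᵥ v₀ = w := by
    rw [transpose_mulVec_eq_of_inr_eq_zero M v₀ hv₀supp, ← hX, ← hv₀', hsplit, mulVec_add,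
      hperp, add_zero]
  have hv₀inl : ∀ i, v₀ (Sum.inl i) = vpar i + vperp i := fun i => by
    rw [← Pi.add_apply, ← hsplit, hv₀']
  have hXw : (X *ᵥ w) ⬝ᵥ vperp = 0 := by
    rw [dotProduct_comm, dotProduct_mulVec, ← mulVec_transpose, hperp, zero_dotProduct]
  have htop : σ ^ 4 * ∑ i, vperp i ^ 2 ≤ ∑ i, ((X *ᵥ w) i - σ ^ 2 * (vpar i + vperp i)) ^ 2 := by
    convert sq_mul_sum_sq_le_of_orthogonal (X *ᵥ w) vpar vperp (σ ^ 2) hXw (hpar vperp hperp)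
      using 2
    ring
  have hbot := sum_sq_mul_smin_sq_mul_smin_sq_le Y Xᵀ vpar
  rw [enorm'_sq, Fintype.sum_sum_type, ← mulVec_mulVec, hMv]
  simp only [Pi.sub_apply, Pi.smul_apply, smul_eq_mul, hv₀supp, hv₀inl, mul_zero, sub_zero,
    mulVec_apply_inl, mulVec_apply_inr, ← hX, ← hY]
  linarith

/-- Row-decomposition lower bound: writing `M = (X over Y)` (rows stacked) and taking a
unit vector `v₀` supported on the `X`-rows with upper part `v₀' = v_∥ + v_⊥`, where `v_⊥`
is the orthogonal projection of `v₀'` onto `ker(Xᵀ)`, for any `σ`,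
`‖MMᵀv₀ - σ²v₀‖² ≥ ‖v_∥‖² s_min(X)² s_min(Y)² + σ⁴ ‖v_⊥‖²`. -/
theorem row_split_lower_bound (q r p : ℕ)
    (M : Matrix (Fin q ⊕ Fin r) (Fin p) ℝ)
    (X : Matrix (Fin q) (Fin p) ℝ) (Y : Matrix (Fin r) (Fin p) ℝ)
    (hX : X = M.submatrix Sum.inl id) (hY : Y = M.submatrix Sum.inr id)
    (v₀ : Fin q ⊕ Fin r → ℝ)
    (hv₀unit : ∑ t, v₀ t ^ 2 = 1)
    (hv₀supp : ∀ t, v₀ (Sum.inr t) = 0)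
    (v₀' vpar vperp : Fin q → ℝ)
    (hv₀' : v₀' = fun t => v₀ (Sum.inl t))
    (hsplit : v₀' = vpar + vperp)
    (hperp : Xᵀ.mulVec vperp = 0)
    (hpar : ∀ w : Fin q → ℝ, Xᵀ.mulVec w = 0 → ∑ t, vpar t * w t = 0)
    (σ : ℝ) :
    enorm' ((M * Mᵀ).mulVec v₀ - σ ^ 2 • v₀) ^ 2 ≥
      (∑ t, vpar t ^ 2) * smin Xᵀ ^ 2 * smin Y ^ 2 + σ ^ 4 * (∑ t, vperp t ^ 2) :=
  row_split_lower_bound_general q r p M X Y hX hY v₀ hv₀supp v₀' vpar vperp hv₀' hsplit hperp hpar σ
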